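/- arXiv:2510.21468 — 6 statements merged into one kernel-verified Lean document; each statement's English description precedes it below -/
import Mathlib

section
/- Let n, p ∈ ℕ and t ∈ ℝ. Let X, ξ ∈ ℝ^{n×p} satisfy XᵀX = I_p and Xᵀξ + ξᵀX = 0, and let S ∈ ℝ^{p×p} be a symmetric matrix. Set B = ξ·S − t·X·S·(ξᵀξ). Then Tr(BᵀB) = Tr(S²·(ξᵀξ)) + t²·Tr(S²·(ξᵀξ)²); in particular, the two cross terms coming from the mixed products of ξS and tXS(ξᵀξ) cancel. -/
open Matrix

/-- Trace identity for the velocity of the polar-decomposition retraction on the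
Stiefel manifold: for `X, ξ` with `XᵀX = I`, `Xᵀξ + ξᵀX = 0` and symmetric `S`,
with `B = ξ·S − t·X·S·(ξᵀξ)` we have
`Tr(BᵀB) = Tr(S²·(ξᵀξ)) + t²·Tr(S²·(ξᵀξ)²)` (the cross terms cancel). -/
theorem stiefel_polar_velocity_trace_identity {n p : ℕ} (t : ℝ)
    (X ξ : Matrix (Fin n) (Fin p) ℝ)
    (hX : Xᵀ * X = 1) (hξ : Xᵀ * ξ + ξᵀ * X = 0)
    (S : Matrix (Fin p) (Fin p) ℝ) (hS : S.IsSymm) :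
    ((ξ * S - t • (X * S * (ξᵀ * ξ)))ᵀ * (ξ * S - t • (X * S * (ξᵀ * ξ)))).trace
      = (S ^ 2 * (ξᵀ * ξ)).trace + t ^ 2 * (S ^ 2 * (ξᵀ * ξ) ^ 2).trace := by
  have hS' : Sᵀ = S := hS
  have hξ' : ξᵀ * X = -(Xᵀ * ξ) := eq_neg_of_add_eq_zero_right hξ
  simp only [transpose_sub, transpose_smul, transpose_mul, transpose_transpose, hS',
    Matrix.sub_mul, Matrix.mul_sub, Matrix.smul_mul, Matrix.mul_smul, smul_smul,
    trace_sub, trace_smul]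
  have h1 : (S * ξᵀ * (ξ * S)).trace = (S ^ 2 * (ξᵀ * ξ)).trace := by
    rw [show S * ξᵀ * (ξ * S) = S * (ξᵀ * ξ) * S by simp only [Matrix.mul_assoc],
      trace_mul_comm]
    congr 1
    simp only [pow_two, Matrix.mul_assoc]
  have h2 : (S * ξᵀ * (X * S * (ξᵀ * ξ))).trace = -(ξᵀ * ξ * (S * Xᵀ) * (ξ * S)).trace := by
    have e1 : S * ξᵀ * (X * S * (ξᵀ * ξ)) = S * (ξᵀ * X * (S * (ξᵀ * ξ))) := by
      simp only [Matrix.mul_assoc]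
    rw [e1, hξ', Matrix.neg_mul, Matrix.mul_neg, trace_neg, neg_inj,
      trace_mul_comm S (Xᵀ * ξ * (S * (ξᵀ * ξ))),
      show ξᵀ * ξ * (S * Xᵀ) * (ξ * S) = (ξᵀ * ξ * S) * (Xᵀ * ξ * S) by
        simp only [Matrix.mul_assoc],
      trace_mul_comm (ξᵀ * ξ * S) (Xᵀ * ξ * S)]
    congr 1
    simp only [Matrix.mul_assoc]
  have h3 : (ξᵀ * ξ * (S * Xᵀ) * (X * S * (ξᵀ * ξ))).trace = (S ^ 2 * (ξᵀ * ξ) ^ 2).trace := by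
    rw [show ξᵀ * ξ * (S * Xᵀ) * (X * S * (ξᵀ * ξ))
          = ξᵀ * ξ * (S * (Xᵀ * X * (S * (ξᵀ * ξ)))) by simp only [Matrix.mul_assoc],
      hX, Matrix.one_mul, trace_mul_comm]
    congr 1
    simp only [pow_two, Matrix.mul_assoc]
  rw [h1, h2, h3]
  simp only [smul_eq_mul]
  ring
end

section
/- Let n, p ∈ ℕ and t ∈ ℝ. Let X, ξ ∈ ℝ^{n×p} satisfy XᵀX = I_p and Xᵀξ + ξᵀX = 0. Set A = I_p + t²·ξᵀξ (a symmetric positive definite, hence invertible, matrix), let S = √((A³)⁻¹) (so S is the matrix A^{−3/2}), and set B = ξ·S − t·X·S·(ξᵀξ), which is the closed form of the velocity (d/dt)R_X(tξ) of the polar-decomposition retraction curve. Then Tr(BᵀB) ≤ Tr(ξᵀξ); equivalently, ‖B‖_F ≤ ‖ξ‖_F. -/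
open Matrix

open scoped ComplexOrder in
/-- The positive semidefinite square root of a positive semidefinite matrix
(the definition `Matrix.PosSemidef.sqrt` of Mathlib of December 2024, since removed). -/
noncomputable def Matrix.PosSemidef.sqrt {n 𝕜 : Type*} [Fintype n] [DecidableEq n] [RCLike 𝕜]
    {A : Matrix n n 𝕜} (hA : A.PosSemidef) : Matrix n n 𝕜 :=
  (hA.1.eigenvectorUnitary : Matrix n n 𝕜) * diagonal ((↑) ∘ Real.sqrt ∘ hA.1.eigenvalues) *
    (star hA.1.eigenvectorUnitary : Matrix n n 𝕜)

open scoped ComplexOrder in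
theorem Matrix.PosSemidef.sqrt_mul_self {n 𝕜 : Type*} [Fintype n] [DecidableEq n] [RCLike 𝕜]
    {A : Matrix n n 𝕜} (hA : A.PosSemidef) : hA.sqrt * hA.sqrt = A := by
  conv_rhs => rw [hA.1.spectral_theorem, Unitary.conjStarAlgAut_apply]
  have hU : (star hA.1.eigenvectorUnitary : Matrix n n 𝕜) * hA.1.eigenvectorUnitary = 1 :=
    Unitary.coe_star_mul_self _
  simp only [Matrix.PosSemidef.sqrt]
  calc _ = (hA.1.eigenvectorUnitary : Matrix n n 𝕜) *
        (diagonal ((↑) ∘ Real.sqrt ∘ hA.1.eigenvalues) *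
          ((star hA.1.eigenvectorUnitary : Matrix n n 𝕜) *
            (hA.1.eigenvectorUnitary : Matrix n n 𝕜)) *
          diagonal ((↑) ∘ Real.sqrt ∘ hA.1.eigenvalues)) *
        (star hA.1.eigenvectorUnitary : Matrix n n 𝕜) := by simp only [Matrix.mul_assoc]
    _ = _ := by
      rw [hU, Matrix.mul_one, diagonal_mul_diagonal]
      congr 3
      funext i
      simp only [Function.comp_apply]
      rw [← RCLike.ofReal_mul, Real.mul_self_sqrt (hA.eigenvalues_nonneg i)]

open scoped ComplexOrder in
theorem Matrix.PosSemidef.posSemidef_sqrt {n 𝕜 : Type*} [Fintype n] [DecidableEq n] [RCLike 𝕜]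
    {A : Matrix n n 𝕜} (hA : A.PosSemidef) : hA.sqrt.PosSemidef := by
  have hD : (diagonal ((↑) ∘ Real.sqrt ∘ hA.1.eigenvalues : n → 𝕜)).PosSemidef :=
    Matrix.PosSemidef.diagonal fun i => by simp [Real.sqrt_nonneg]
  have := hD.mul_mul_conjTranspose_same (hA.1.eigenvectorUnitary : Matrix n n 𝕜)
  simpa [Matrix.PosSemidef.sqrt, Unitary.coe_star, Matrix.star_eq_conjTranspose] using this

set_option linter.unusedSectionVars false

lemma psd_trace_nonneg {m : Type*} [Fintype m] [DecidableEq m]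
    {P : Matrix m m ℝ} (hP : P.PosSemidef) : 0 ≤ P.trace := by
  rw [Matrix.trace]
  refine Finset.sum_nonneg fun i _ => ?_
  have := hP.dotProduct_mulVec_nonneg (Pi.single i 1)
  simpa [Matrix.diag, dotProduct, Matrix.mulVec_single, Pi.single_apply] using this

lemma psd_trace_mul_nonneg {m : Type*} [Fintype m] [DecidableEq m]
    {P Q : Matrix m m ℝ} (hP : P.PosSemidef) (hQ : Q.PosSemidef) :
    0 ≤ (P * Q).trace := by
  obtain ⟨C, rfl⟩ : ∃ C : Matrix m m ℝ, P = Cᴴ * C :=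
    ⟨hP.sqrt, by rw [hP.posSemidef_sqrt.1.eq, hP.sqrt_mul_self]⟩
  rw [Matrix.mul_assoc, Matrix.trace_mul_comm]
  have : ((C * Q) * Cᴴ).PosSemidef := hQ.mul_mul_conjTranspose_same C
  simpa [Matrix.mul_assoc] using psd_trace_nonneg this

lemma psd_smul' {m : Type*} [Fintype m] [DecidableEq m]
    {c : ℝ} (hc : 0 ≤ c) {P : Matrix m m ℝ} (hP : P.PosSemidef) :
    (c • P).PosSemidef := by
  refine Matrix.PosSemidef.of_dotProduct_mulVec_nonneg ?_ fun x => ?_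
  · unfold Matrix.IsHermitian
    rw [Matrix.conjTranspose_smul, hP.1]
    simp
  · rw [Matrix.smul_mulVec, dotProduct_smul, smul_eq_mul]
    exact mul_nonneg hc (hP.dotProduct_mulVec_nonneg x)


/-- First condition of Assumption 2 for the polar-decomposition retraction on the
Stiefel manifold: with `A = I + t²ξᵀξ`, `S = A^{−3/2}` and
`B = (d/dt)R_X(tξ) = ξ·S − t·X·S·(ξᵀξ)`, we have `Tr(BᵀB) ≤ Tr(ξᵀξ)`,
i.e. `‖B‖_F ≤ ‖ξ‖_F`. -/
theorem stiefel_polar_velocity_norm_bound {n p : ℕ} (t : ℝ)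
    (X ξ : Matrix (Fin n) (Fin p) ℝ)
    (hX : Xᵀ * X = 1) (hξ : Xᵀ * ξ + ξᵀ * X = 0)
    (hA : ((((1 : Matrix (Fin p) (Fin p) ℝ) + t ^ 2 • (ξᵀ * ξ)) ^ 3)⁻¹).PosSemidef) :
    ((ξ * hA.sqrt - t • (X * hA.sqrt * (ξᵀ * ξ)))ᵀ *
        (ξ * hA.sqrt - t • (X * hA.sqrt * (ξᵀ * ξ)))).trace
      ≤ (ξᵀ * ξ).trace := by
  set M : Matrix (Fin p) (Fin p) ℝ := ξᵀ * ξ with hM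
  set A : Matrix (Fin p) (Fin p) ℝ := 1 + t ^ 2 • M with hAdef
  set S : Matrix (Fin p) (Fin p) ℝ := hA.sqrt with hSdef
  -- basic facts
  have hMps : M.PosSemidef := by
    have := Matrix.posSemidef_conjTranspose_mul_self ξ
    simpa [Matrix.conjTranspose_eq_transpose_of_trivial] using this
  have hMsym : Mᵀ = M := by
    have := hMps.1
    exact (by simpa [Matrix.conjTranspose_eq_transpose_of_trivial] using this : M.IsSymm).eq
  have hApd : A.PosDef := by
    have h1 : (1 : Matrix (Fin p) (Fin p) ℝ).PosDef := Matrix.PosDef.one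
    exact h1.add_posSemidef (psd_smul' (sq_nonneg t) hMps)
  have hAsym : Aᵀ = A := by
    have := hApd.1
    exact (by simpa [Matrix.conjTranspose_eq_transpose_of_trivial] using this : A.IsSymm).eq
  have hAunit : IsUnit A.det := (Matrix.isUnit_iff_isUnit_det A).1 hApd.isUnit
  have hS2 : S * S = (A ^ 3)⁻¹ := hA.sqrt_mul_self
  have hSsym : Sᵀ = S := by
    have := hA.posSemidef_sqrt.1
    exact (by simpa [Matrix.conjTranspose_eq_transpose_of_trivial] using this : S.IsSymm).eq
  -- transpose of B
  have hBt : (ξ * S - t • (X * S * M))ᵀ = S * ξᵀ - t • (M * S * Xᵀ) := by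
    simp [Matrix.transpose_sub, Matrix.transpose_smul, Matrix.transpose_mul, hSsym, hMsym,
      Matrix.mul_assoc]
  -- expansion of BᵀB
  have hexp : (ξ * S - t • (X * S * M))ᵀ * (ξ * S - t • (X * S * M))
      = S * M * S - t • (S * ξᵀ * X * S * M) - t • (M * S * Xᵀ * ξ * S)
        + (t ^ 2) • (M * S * Xᵀ * X * S * M) := by
    rw [hBt]
    rw [Matrix.sub_mul, Matrix.mul_sub, Matrix.mul_sub,
      Matrix.smul_mul, Matrix.mul_smul, Matrix.smul_mul, Matrix.mul_smul]
    rw [smul_smul, ← sq]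
    simp only [hM, Matrix.mul_assoc]
    abel
  rw [hexp]
  -- trace of cross terms cancels
  have hcross : (S * ξᵀ * X * S * M).trace + (M * S * Xᵀ * ξ * S).trace = 0 := by
    have e1 : (S * ξᵀ * X * S * M).trace = ((ξᵀ * X) * (S * M * S)).trace := by
      rw [show S * ξᵀ * X * S * M = S * ((ξᵀ * X) * (S * M)) by
        simp only [Matrix.mul_assoc]]
      rw [Matrix.trace_mul_comm]
      simp only [Matrix.mul_assoc]
    have e2 : (M * S * Xᵀ * ξ * S).trace = ((Xᵀ * ξ) * (S * M * S)).trace := by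
      rw [show M * S * Xᵀ * ξ * S = (M * S) * ((Xᵀ * ξ) * S) by
        simp only [Matrix.mul_assoc]]
      rw [Matrix.trace_mul_comm]
      simp only [Matrix.mul_assoc]
    rw [e1, e2, ← Matrix.trace_add, ← Matrix.add_mul, add_comm (ξᵀ * X) (Xᵀ * ξ), hξ,
      Matrix.zero_mul, Matrix.trace_zero]
  -- main terms
  have emain1 : (S * M * S).trace = (M * (A ^ 3)⁻¹).trace := by
    rw [show S * M * S = S * (M * S) by rw [Matrix.mul_assoc], Matrix.trace_mul_comm,
      Matrix.mul_assoc, hS2]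
  have emain2 : (M * S * Xᵀ * X * S * M).trace = ((M * M) * (A ^ 3)⁻¹).trace := by
    rw [show M * S * Xᵀ * X * S * M = M * S * (Xᵀ * X) * S * M by
      simp only [Matrix.mul_assoc], hX]
    rw [Matrix.mul_one]
    rw [show M * S * S * M = (M * S * S) * M by rfl, Matrix.trace_mul_comm]
    rw [show M * (M * S * S) = (M * M) * (S * S) by simp only [Matrix.mul_assoc], hS2]
  -- combine
  rw [Matrix.trace_add, Matrix.trace_sub, Matrix.trace_sub, Matrix.trace_smul,
    Matrix.trace_smul, Matrix.trace_smul, emain1, emain2]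
  have hc' : t * (S * ξᵀ * X * S * M).trace + t * (M * S * Xᵀ * ξ * S).trace = 0 := by
    rw [← mul_add, hcross, mul_zero]
  rw [smul_eq_mul, smul_eq_mul, smul_eq_mul]
  have key : (M * (A ^ 3)⁻¹).trace + t ^ 2 * ((M * M) * (A ^ 3)⁻¹).trace
      = ((M * A) * (A ^ 3)⁻¹).trace := by
    rw [show M * A = M + t ^ 2 • (M * M) by
      rw [hAdef, Matrix.mul_add, Matrix.mul_one, Matrix.mul_smul]]
    rw [Matrix.add_mul, Matrix.trace_add, Matrix.smul_mul, Matrix.trace_smul, smul_eq_mul]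
  have goal2 : ((M * A) * (A ^ 3)⁻¹).trace ≤ M.trace := by
    -- A * (A^3)⁻¹ = A⁻¹ * A⁻¹
    have hAA : A * (A ^ 3)⁻¹ = A⁻¹ * A⁻¹ := by
      rw [pow_succ, pow_succ, pow_one, Matrix.mul_inv_rev, Matrix.mul_inv_rev,
        ← Matrix.mul_assoc, ← Matrix.mul_assoc, Matrix.mul_nonsing_inv _ hAunit,
        Matrix.one_mul]
    have hgap : (1 : Matrix (Fin p) (Fin p) ℝ) - A⁻¹ * A⁻¹ = A⁻¹ * (A * A - 1) * A⁻¹ := by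
      rw [Matrix.mul_sub, Matrix.sub_mul, Matrix.mul_one, ← Matrix.mul_assoc,
        Matrix.nonsing_inv_mul _ hAunit, Matrix.one_mul, Matrix.mul_nonsing_inv _ hAunit]
    have hgapPsd : (A⁻¹ * (A * A - 1) * A⁻¹).PosSemidef := by
      have hdiff : A * A - 1 = (2 * t ^ 2) • M + (t ^ 2 * t ^ 2) • (M * M) := by
        rw [hAdef]
        simp only [Matrix.add_mul, Matrix.mul_add, Matrix.one_mul, Matrix.mul_one,
          Matrix.smul_mul, Matrix.mul_smul, smul_smul]
        module
      have hMMps : (M * M).PosSemidef := by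
        have := Matrix.posSemidef_conjTranspose_mul_self M
        rwa [hMps.1] at this
      have hdiffPsd : (A * A - 1).PosSemidef := by
        rw [hdiff]
        exact (psd_smul' (by positivity) hMps).add
          (psd_smul' (mul_nonneg (sq_nonneg t) (sq_nonneg t)) hMMps)
      have hAinvH : (A⁻¹)ᴴ = A⁻¹ := hApd.1.inv
      have := hdiffPsd.mul_mul_conjTranspose_same A⁻¹
      rwa [hAinvH] at this
    have : 0 ≤ (M * (A⁻¹ * (A * A - 1) * A⁻¹)).trace :=
      psd_trace_mul_nonneg hMps hgapPsd
    rw [← hgap, Matrix.mul_sub, Matrix.mul_one, Matrix.trace_sub, sub_nonneg] at this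
    calc ((M * A) * (A ^ 3)⁻¹).trace = (M * (A⁻¹ * A⁻¹)).trace := by
          rw [Matrix.mul_assoc, hAA]
      _ ≤ M.trace := this
  linarith [goal2, key, hc']
end

section
/- Let p ∈ ℕ, t ∈ ℝ, and let M ∈ ℝ^{p×p} be symmetric positive semidefinite. Then A = I_p + t²·M is symmetric positive definite (hence invertible), and Tr(A⁻²·M) ≤ Tr(M). -/
open Matrix
open scoped MatrixOrder

private lemma smul_posSemidef {p : ℕ} {c : ℝ} (hc : 0 ≤ c)
    {M : Matrix (Fin p) (Fin p) ℝ} (hM : M.PosSemidef) : (c • M).PosSemidef := by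
  refine ⟨?_, fun x => ?_⟩
  · show (c • M)ᴴ = c • M
    rw [conjTranspose_smul, star_trivial, hM.1.eq]
  · have h : (c • M).PosSemidef := .of_dotProduct_mulVec_nonneg
      (by rw [IsHermitian, conjTranspose_smul, star_trivial, hM.1.eq]) fun y => by
        rw [smul_mulVec, dotProduct_smul, smul_eq_mul]
        exact mul_nonneg hc (hM.dotProduct_mulVec_nonneg y)
    exact h.2 x

private lemma trace_nonneg_of_posSemidef {p : ℕ} {M : Matrix (Fin p) (Fin p) ℝ}
    (hM : M.PosSemidef) : 0 ≤ M.trace := by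
  rw [Matrix.trace]
  apply Finset.sum_nonneg
  intro i _
  exact hM.diag_nonneg

private lemma trace_mul_nonneg' {p : ℕ} {P Q : Matrix (Fin p) (Fin p) ℝ}
    (hP : P.PosSemidef) (hQ : Q.PosSemidef) : 0 ≤ (P * Q).trace := by
  have h1 : P * Q = P * (CFC.sqrt Q * CFC.sqrt Q) := by rw [CFC.sqrt_mul_sqrt_self Q hQ.nonneg]
  have h2 : (P * (CFC.sqrt Q * CFC.sqrt Q)).trace = (CFC.sqrt Q * P * CFC.sqrt Q).trace := by
    rw [← mul_assoc, Matrix.trace_mul_cycle]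
  have h3 : (CFC.sqrt Q * P * CFC.sqrt Q).PosSemidef := by
    have := hP.conjTranspose_mul_mul_same (CFC.sqrt Q)
    rwa [(CFC.sqrt_nonneg Q).posSemidef.1.eq] at this
  rw [h1, h2]
  exact trace_nonneg_of_posSemidef h3

/-- Spectral estimate for the velocity bound: for `M` symmetric PSD and `A = I + t²M`,
`A` is positive definite (hence invertible) and `Tr(A⁻²·M) ≤ Tr(M)`. -/
theorem trace_inv_sq_mul_le {p : ℕ} (t : ℝ)
    (M : Matrix (Fin p) (Fin p) ℝ) (hM : M.PosSemidef) :
    ((1 : Matrix (Fin p) (Fin p) ℝ) + t ^ 2 • M).PosDef ∧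
      ((((1 : Matrix (Fin p) (Fin p) ℝ) + t ^ 2 • M) ^ 2)⁻¹ * M).trace ≤ M.trace := by
  set A : Matrix (Fin p) (Fin p) ℝ := 1 + t ^ 2 • M with hA
  have hsmul : (t ^ 2 • M).PosSemidef := smul_posSemidef (sq_nonneg t) hM
  have hApd : A.PosDef := Matrix.PosDef.add_posSemidef Matrix.PosDef.one hsmul
  refine ⟨hApd, ?_⟩
  have hAinv : (A⁻¹).PosDef := hApd.inv
  have hinvsq : ((A ^ 2)⁻¹).PosSemidef := by
    rw [← Matrix.inv_pow']
    exact hAinv.posSemidef.pow 2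
  have hB : (A ^ 2 * M - M).PosSemidef := by
    have hexp : A ^ 2 * M - M = (2 * t ^ 2) • M ^ 2 + (t ^ 2 * t ^ 2) • M ^ 3 := by
      simp only [hA, pow_two, pow_three, add_mul, mul_add, one_mul, mul_one,
        smul_mul_assoc, mul_smul_comm, smul_smul, mul_assoc]
      module
    rw [hexp]
    exact ((smul_posSemidef (by positivity) (hM.pow 2))).add
      (smul_posSemidef (mul_nonneg (sq_nonneg t) (sq_nonneg t)) (hM.pow 3))
  have hunit : IsUnit (A ^ 2) := hApd.isUnit.pow 2
  have hdet : IsUnit (A ^ 2).det := (Matrix.isUnit_iff_isUnit_det _).mp hunit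
  have key : 0 ≤ ((A ^ 2)⁻¹ * (A ^ 2 * M - M)).trace := trace_mul_nonneg' hinvsq hB
  have hcancel : (A ^ 2)⁻¹ * (A ^ 2 * M) = M := by
    rw [← mul_assoc, Matrix.nonsing_inv_mul _ hdet, one_mul]
  have hfinal : ((A ^ 2)⁻¹ * (A ^ 2 * M - M)).trace
      = M.trace - ((A ^ 2)⁻¹ * M).trace := by
    rw [mul_sub, hcancel, trace_sub]
  rw [hfinal] at key
  linarith
end

section
/- Let p ∈ ℕ, t ∈ ℝ, and let M ∈ ℝ^{p×p} be symmetric positive semidefinite. With A = I_p + t²·M (symmetric positive definite, hence invertible), we have Tr(A⁻⁴·(M² + 4t²·M³)) ≤ (Tr(M))². -/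
open Matrix

/-- Spectral estimate for the acceleration bound: for `M` symmetric PSD and
`A = I + t²M`, `Tr(A⁻⁴·(M² + 4t²·M³)) ≤ (Tr M)²`. -/
theorem trace_inv_pow_four_mul_le {p : ℕ} (t : ℝ)
    (M : Matrix (Fin p) (Fin p) ℝ) (hM : M.PosSemidef) :
    ((((1 : Matrix (Fin p) (Fin p) ℝ) + t ^ 2 • M) ^ 4)⁻¹ *
        (M ^ 2 + (4 * t ^ 2) • M ^ 3)).trace
      ≤ M.trace ^ 2 := by
  classical
  have hH := hM.1
  set d : Fin p → ℝ := hH.eigenvalues with hd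
  have hd0 : ∀ i, 0 ≤ d i := hM.eigenvalues_nonneg
  set U : Matrix (Fin p) (Fin p) ℝ := (hH.eigenvectorUnitary : Matrix (Fin p) (Fin p) ℝ) with hU
  have hUU : star U * U = 1 := Unitary.coe_star_mul_self hH.eigenvectorUnitary
  have hUU' : U * star U = 1 := Unitary.coe_mul_star_self hH.eigenvectorUnitary
  have conj_mul : ∀ f g : Fin p → ℝ,
      (U * diagonal f * star U) * (U * diagonal g * star U)
        = U * diagonal (fun i => f i * g i) * star U := by
    intro f g
    calc U * diagonal f * star U * (U * diagonal g * star U)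
        = U * (diagonal f * ((star U * U) * (diagonal g * star U))) := by
          simp only [mul_assoc]
      _ = U * diagonal (fun i => f i * g i) * star U := by
          rw [hUU, one_mul, ← mul_assoc (diagonal f), diagonal_mul_diagonal]
          simp only [mul_assoc]
  have hspec : M = U * diagonal d * star U := by
    have := hH.spectral_theorem
    simpa using this
  have conj_one : U * diagonal (fun _ : Fin p => (1:ℝ)) * star U = 1 := by
    rw [diagonal_one, mul_one, hUU']
  have conj_smul : ∀ (c : ℝ) (f : Fin p → ℝ),
      c • (U * diagonal f * star U) = U * diagonal (fun i => c * f i) * star U := by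
    intro c f
    rw [show (fun i => c * f i) = c • f from rfl, diagonal_smul]
    simp [Matrix.mul_smul, Matrix.smul_mul]
  have conj_add : ∀ f g : Fin p → ℝ,
      (U * diagonal f * star U) + (U * diagonal g * star U)
        = U * diagonal (fun i => f i + g i) * star U := by
    intro f g
    rw [← diagonal_add, Matrix.mul_add, Matrix.add_mul]
  have hA : (1 : Matrix (Fin p) (Fin p) ℝ) + t ^ 2 • M
      = U * diagonal (fun i => 1 + t ^ 2 * d i) * star U := by
    rw [hspec, conj_smul, ← conj_add, conj_one]
  have conj_pow : ∀ (f : Fin p → ℝ) (n : ℕ),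
      (U * diagonal f * star U) ^ (n+1) = U * diagonal (fun i => f i ^ (n+1)) * star U := by
    intro f n
    induction n with
    | zero => simp
    | succ k ih =>
      rw [pow_succ, ih, conj_mul,
        show (fun i => f i ^ (k+1) * f i) = fun i => f i ^ (k+1+1) from
          funext fun i => (pow_succ _ _).symm]
  have hpos : ∀ i, (0:ℝ) < 1 + t ^ 2 * d i := by
    intro i
    have := mul_nonneg (sq_nonneg t) (hd0 i)
    linarith
  have hinv : ((((1 : Matrix (Fin p) (Fin p) ℝ) + t ^ 2 • M) ^ 4))⁻¹
      = U * diagonal (fun i => ((1 + t ^ 2 * d i) ^ 4)⁻¹) * star U := by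
    apply inv_eq_right_inv
    rw [hA, show (4:ℕ) = 3 + 1 from rfl, conj_pow, conj_mul]
    rw [show (fun i => (1 + t ^ 2 * d i) ^ (3+1) * ((1 + t ^ 2 * d i) ^ 4)⁻¹)
        = fun _ : Fin p => (1:ℝ) from ?_, conj_one]
    funext i
    rw [show (3+1) = 4 from rfl, mul_inv_cancel₀ (pow_ne_zero 4 (hpos i).ne')]
  have c2 := conj_pow d 1
  have c3 := conj_pow d 2
  norm_num at c2 c3
  have hM2 : M ^ 2 + (4 * t ^ 2) • M ^ 3
      = U * diagonal (fun i => d i ^ 2 + 4 * t ^ 2 * d i ^ 3) * star U := by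
    rw [hspec, c2, c3, conj_smul, conj_add]
  rw [hinv, hM2, conj_mul]
  have htr : (U * diagonal (fun i => ((1 + t ^ 2 * d i) ^ 4)⁻¹ *
      (d i ^ 2 + 4 * t ^ 2 * d i ^ 3)) * star U).trace
      = ∑ i, ((1 + t ^ 2 * d i) ^ 4)⁻¹ * (d i ^ 2 + 4 * t ^ 2 * d i ^ 3) := by
    rw [trace_mul_comm, ← mul_assoc, hUU, one_mul, trace_diagonal]
  rw [htr]
  have hTrM : M.trace = ∑ i, d i := by
    rw [hspec, trace_mul_comm, ← mul_assoc, hUU, one_mul, trace_diagonal]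
  rw [hTrM]
  calc ∑ i, ((1 + t ^ 2 * d i) ^ 4)⁻¹ * (d i ^ 2 + 4 * t ^ 2 * d i ^ 3)
      ≤ ∑ i, d i ^ 2 := by
        apply Finset.sum_le_sum
        intro i _
        rw [inv_mul_le_iff₀ (pow_pos (hpos i) 4)]
        have hx : 0 ≤ t ^ 2 * d i := mul_nonneg (sq_nonneg t) (hd0 i)
        have h4 : 1 + 4 * (t ^ 2 * d i) ≤ (1 + t ^ 2 * d i) ^ 4 := by
          nlinarith [sq_nonneg (t ^ 2 * d i), pow_nonneg hx 3, pow_nonneg hx 4]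
        have h5 := mul_le_mul_of_nonneg_left h4 (sq_nonneg (d i))
        nlinarith [h5]
    _ ≤ (∑ i, d i) ^ 2 := Finset.sum_sq_le_sq_sum_of_nonneg (fun i _ => hd0 i)
end

section
/- Let E be a real inner product space, T ∈ ℕ with T ≥ 1, η > 0, and D, G, ε₁, ε₂ ≥ 0. Suppose Δ₀, …, Δ_T ∈ E, u₀, …, u_{T−1} ∈ E, and g₀, …, g_{T−1} ∈ E satisfy: Δ₀ = 0; ‖Δ_t‖ ≤ D for all 0 ≤ t ≤ T; ‖u_t‖ ≤ D and ‖g_t‖ ≤ G for all 0 ≤ t ≤ T−1; ‖Δ_{t+1} − u_t‖² ≤ ‖Δ_t − η·g_t − u_t‖² + ε₁² for all 0 ≤ t ≤ T−1; and ‖u_t − u_{t−1}‖ ≤ ε₂ for all 1 ≤ t ≤ T−1. Then Σ_{t=0}^{T−1} ⟨g_t, Δ_t − u_t⟩ ≤ D²/(2η) + 2·D·T·ε₂/η + (η/2)·G²·T + T·ε₁²/(2η). -/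
open RealInnerProductSpace

lemma sq_norm_sub_le' {E : Type*} [NormedAddCommGroup E] [InnerProductSpace ℝ E]
    (a b : E) : ‖a‖ ^ 2 - ‖b‖ ^ 2 ≤ ‖a - b‖ * ‖a + b‖ := by
  have h : ‖a‖ ^ 2 - ‖b‖ ^ 2 = ⟪a - b, a + b⟫ := by
    simp only [inner_sub_left, inner_add_right, real_inner_self_eq_norm_sq]
    rw [real_inner_comm b a]
    ring
  rw [h]
  exact real_inner_le_norm _ _

/-- Abstract 'Term D' regret analysis from the proof of Theorem 3.2 (RO2NC with
projections): under the perturbed projection contraction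
`‖Δ_{t+1} − u_t‖² ≤ ‖Δ_t − η g_t − u_t‖² + ε₁²` and comparator drift
`‖u_t − u_{t−1}‖ ≤ ε₂`, one has
`Σ_{t<T} ⟨g_t, Δ_t − u_t⟩ ≤ D²/(2η) + 2DTε₂/η + (η/2)G²T + Tε₁²/(2η)`. -/
theorem projection_regret_bound {E : Type*} [NormedAddCommGroup E] [InnerProductSpace ℝ E]
    (T : ℕ) (hT : 1 ≤ T) (η D G ε₁ ε₂ : ℝ)
    (hη : 0 < η) (hD : 0 ≤ D) (hG : 0 ≤ G) (hε₁ : 0 ≤ ε₁) (hε₂ : 0 ≤ ε₂)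
    (Δ u g : ℕ → E)
    (hΔ0 : Δ 0 = 0)
    (hΔ : ∀ t ≤ T, ‖Δ t‖ ≤ D)
    (hu : ∀ t < T, ‖u t‖ ≤ D)
    (hg : ∀ t < T, ‖g t‖ ≤ G)
    (hrec : ∀ t < T, ‖Δ (t + 1) - u t‖ ^ 2 ≤ ‖Δ t - η • g t - u t‖ ^ 2 + ε₁ ^ 2)
    (hdrift : ∀ t, 1 ≤ t → t ≤ T - 1 → ‖u t - u (t - 1)‖ ≤ ε₂) :
    ∑ t ∈ Finset.range T, ⟪g t, Δ t - u t⟫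
      ≤ D ^ 2 / (2 * η) + 2 * D * T * ε₂ / η + (η / 2) * G ^ 2 * T
        + T * ε₁ ^ 2 / (2 * η) := by
  set c : ℕ → ℝ := fun t => if t < T then ‖Δ t - u t‖ ^ 2 else 0 with hcdef
  -- key drift lemma
  have hkey : ∀ t < T, c (t + 1) - 4 * D * ε₂ ≤ ‖Δ (t + 1) - u t‖ ^ 2 := by
    intro t ht
    by_cases h1 : t + 1 < T
    · have hd : ‖u (t + 1) - u t‖ ≤ ε₂ := by
        have := hdrift (t + 1) (by omega) (by omega)
        simpa using this
      have hab := sq_norm_sub_le' (Δ (t + 1) - u (t + 1)) (Δ (t + 1) - u t)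
      have h2 : ‖(Δ (t + 1) - u (t + 1)) - (Δ (t + 1) - u t)‖ = ‖u (t + 1) - u t‖ := by
        rw [show (Δ (t + 1) - u (t + 1)) - (Δ (t + 1) - u t) = -(u (t + 1) - u t) by abel]
        rw [norm_neg]
      have h3 : ‖(Δ (t + 1) - u (t + 1)) + (Δ (t + 1) - u t)‖ ≤ 4 * D := by
        calc ‖(Δ (t + 1) - u (t + 1)) + (Δ (t + 1) - u t)‖
            ≤ ‖Δ (t + 1) - u (t + 1)‖ + ‖Δ (t + 1) - u t‖ := norm_add_le _ _
          _ ≤ (‖Δ (t + 1)‖ + ‖u (t + 1)‖) + (‖Δ (t + 1)‖ + ‖u t‖) := by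
              gcongr <;> exact norm_sub_le _ _
          _ ≤ (D + D) + (D + D) := by
              gcongr
              · exact hΔ _ (by omega)
              · exact hu _ h1
              · exact hΔ _ (by omega)
              · exact hu _ ht
          _ = 4 * D := by ring
      have hprod : ‖(Δ (t + 1) - u (t + 1)) - (Δ (t + 1) - u t)‖ *
          ‖(Δ (t + 1) - u (t + 1)) + (Δ (t + 1) - u t)‖ ≤ ε₂ * (4 * D) := by
        apply mul_le_mul (h2 ▸ hd) h3 (norm_nonneg _) hε₂
      have : c (t + 1) = ‖Δ (t + 1) - u (t + 1)‖ ^ 2 := by simp [hcdef, h1]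
      rw [this]
      nlinarith [hab]
    · have : c (t + 1) = 0 := by simp [hcdef, h1]
      rw [this]
      nlinarith [sq_nonneg (‖Δ (t + 1) - u t‖), mul_nonneg (mul_nonneg (by norm_num : (0:ℝ) ≤ 4) hD) hε₂]
  -- per-step bound
  have hstep : ∀ t < T, ⟪g t, Δ t - u t⟫ ≤
      (c t - c (t + 1)) / (2 * η) + (2 * D * ε₂ / η + η / 2 * G ^ 2 + ε₁ ^ 2 / (2 * η)) := by
    intro t ht
    have hexp : ‖Δ t - η • g t - u t‖ ^ 2
        = ‖Δ t - u t‖ ^ 2 - 2 * η * ⟪g t, Δ t - u t⟫ + η ^ 2 * ‖g t‖ ^ 2 := by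
      have h0 : Δ t - η • g t - u t = (Δ t - u t) - η • g t := by abel
      rw [h0, norm_sub_sq_real, real_inner_smul_right, norm_smul, real_inner_comm]
      rw [Real.norm_eq_abs, abs_of_pos hη]
      ring
    have hct : c t = ‖Δ t - u t‖ ^ 2 := by simp [hcdef, ht]
    have hg2 : ‖g t‖ ^ 2 ≤ G ^ 2 := by
      have := hg t ht
      nlinarith [norm_nonneg (g t)]
    have hX : 2 * η * ⟪g t, Δ t - u t⟫ ≤
        c t - c (t + 1) + 4 * D * ε₂ + η ^ 2 * G ^ 2 + ε₁ ^ 2 := by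
      have h1 := hrec t ht
      have h2 := hkey t ht
      rw [hexp] at h1
      rw [hct]
      nlinarith [sq_nonneg η]
    have h2η : (0:ℝ) < 2 * η := by linarith
    calc ⟪g t, Δ t - u t⟫ = (2 * η * ⟪g t, Δ t - u t⟫) / (2 * η) := by
          field_simp
      _ ≤ (c t - c (t + 1) + 4 * D * ε₂ + η ^ 2 * G ^ 2 + ε₁ ^ 2) / (2 * η) := by
          exact div_le_div_of_nonneg_right hX h2η.le |>.trans_eq rfl
      _ = (c t - c (t + 1)) / (2 * η) + (2 * D * ε₂ / η + η / 2 * G ^ 2 + ε₁ ^ 2 / (2 * η)) := by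
          field_simp
          ring
  have hc0 : c 0 ≤ D ^ 2 := by
    have : c 0 = ‖u 0‖ ^ 2 := by simp [hcdef, show 0 < T from hT, hΔ0]
    rw [this]
    nlinarith [hu 0 hT, norm_nonneg (u 0)]
  have hcT : c T = 0 := by simp [hcdef]
  calc ∑ t ∈ Finset.range T, ⟪g t, Δ t - u t⟫
      ≤ ∑ t ∈ Finset.range T, ((c t - c (t + 1)) / (2 * η)
          + (2 * D * ε₂ / η + η / 2 * G ^ 2 + ε₁ ^ 2 / (2 * η))) := by
        apply Finset.sum_le_sum
        intro t ht
        exact hstep t (Finset.mem_range.mp ht)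
    _ = (c 0 - c T) / (2 * η) + T * (2 * D * ε₂ / η + η / 2 * G ^ 2 + ε₁ ^ 2 / (2 * η)) := by
        rw [Finset.sum_add_distrib, ← Finset.sum_div, Finset.sum_range_sub' c T,
          Finset.sum_const, Finset.card_range, nsmul_eq_mul]
    _ ≤ D ^ 2 / (2 * η) + 2 * D * T * ε₂ / η + (η / 2) * G ^ 2 * T
        + T * ε₁ ^ 2 / (2 * η) := by
        rw [hcT]
        have h1 : (c 0 - 0) / (2 * η) ≤ D ^ 2 / (2 * η) := by
          apply div_le_div_of_nonneg_right (by linarith) (by linarith)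
        have h2 : (T:ℝ) * (2 * D * ε₂ / η + η / 2 * G ^ 2 + ε₁ ^ 2 / (2 * η))
            = 2 * D * T * ε₂ / η + (η / 2) * G ^ 2 * T + T * ε₁ ^ 2 / (2 * η) := by
          field_simp
        linarith
end

section
/- Let E be a real inner product space, m ∈ ℕ, C ≥ 0, and a ≤ b real numbers. Let n₁, …, n_m : ℝ → E be differentiable functions with ‖n_i(t)‖ = 1 and ‖n_i'(t)‖ ≤ C for all i and all t ∈ [a, b]. Fix v ∈ E and define ψ : ℝ → E by ψ(t) = v − Σ_{i=1}^m ⟨n_i(t), v⟩·n_i(t). Then ‖ψ(b) − ψ(a)‖ ≤ 2·m·C·‖v‖·(b − a). -/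
open RealInnerProductSpace

/-- Quantitative core of Lemma A.5: if `n₁, …, n_m : ℝ → E` are differentiable,
of unit norm on `[a,b]` with `‖n_i'(t)‖ ≤ C` there, and
`ψ(t) = v − Σᵢ ⟨n_i(t), v⟩·n_i(t)`, then `‖ψ(b) − ψ(a)‖ ≤ 2mC‖v‖(b − a)`. -/
theorem moving_frame_projection_lipschitz {E : Type*} [NormedAddCommGroup E]
    [InnerProductSpace ℝ E] (m : ℕ) (C a b : ℝ) (hC : 0 ≤ C) (hab : a ≤ b)
    (n : Fin m → ℝ → E)
    (hdiff : ∀ i, Differentiable ℝ (n i))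
    (hunit : ∀ i, ∀ t ∈ Set.Icc a b, ‖n i t‖ = 1)
    (hderiv : ∀ i, ∀ t ∈ Set.Icc a b, ‖deriv (n i) t‖ ≤ C)
    (v : E) :
    ‖(v - ∑ i, ⟪n i b, v⟫ • n i b) - (v - ∑ i, ⟪n i a, v⟫ • n i a)‖
      ≤ 2 * m * C * ‖v‖ * (b - a) := by
  have key : ∀ i : Fin m, ‖(⟪n i b, v⟫ • n i b) - (⟪n i a, v⟫ • n i a)‖
      ≤ 2 * C * ‖v‖ * (b - a) := by
    intro i
    set f : ℝ → E := fun t => ⟪n i t, v⟫ • n i t with hf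
    set f' : ℝ → E := fun t => ⟪n i t, v⟫ • deriv (n i) t + ⟪deriv (n i) t, v⟫ • n i t with hf'
    have hd : ∀ t ∈ Set.Icc a b, HasDerivWithinAt f (f' t) (Set.Icc a b) t := by
      intro t ht
      have hn : HasDerivAt (n i) (deriv (n i) t) t := (hdiff i t).hasDerivAt
      have h1 : HasDerivAt (fun t => (⟪n i t, v⟫ : ℝ)) ⟪deriv (n i) t, v⟫ t := by
        simpa using (hn.inner ℝ (hasDerivAt_const t v))
      exact ((h1.smul hn).hasDerivWithinAt)
    have hb : ∀ t ∈ Set.Icc a b, ‖f' t‖ ≤ 2 * C * ‖v‖ := by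
      intro t ht
      have h1 : ‖(⟪deriv (n i) t, v⟫ : ℝ) • n i t‖ ≤ C * ‖v‖ := by
        rw [norm_smul, hunit i t ht, mul_one]
        calc |(⟪deriv (n i) t, v⟫ : ℝ)| ≤ ‖deriv (n i) t‖ * ‖v‖ := abs_real_inner_le_norm _ _
          _ ≤ C * ‖v‖ := by gcongr; exact hderiv i t ht
      have h2 : ‖(⟪n i t, v⟫ : ℝ) • deriv (n i) t‖ ≤ C * ‖v‖ := by
        rw [norm_smul]
        calc |(⟪n i t, v⟫ : ℝ)| * ‖deriv (n i) t‖
            ≤ (‖n i t‖ * ‖v‖) * C := by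
              gcongr
              · exact abs_real_inner_le_norm _ _
              · exact hderiv i t ht
          _ = C * ‖v‖ := by rw [hunit i t ht]; ring
      calc ‖f' t‖ ≤ ‖(⟪n i t, v⟫ : ℝ) • deriv (n i) t‖ + ‖(⟪deriv (n i) t, v⟫ : ℝ) • n i t‖ :=
            norm_add_le _ _
        _ ≤ C * ‖v‖ + C * ‖v‖ := add_le_add h2 h1
        _ = 2 * C * ‖v‖ := by ring
    have hb' : ∀ t ∈ Set.Ico a b, ‖f' t‖ ≤ 2 * C * ‖v‖ := fun t ht => hb t (Set.Ico_subset_Icc_self ht)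
    have := norm_image_sub_le_of_norm_deriv_le_segment' hd hb' b ⟨hab, le_refl b⟩
    simpa using this
  calc ‖(v - ∑ i, ⟪n i b, v⟫ • n i b) - (v - ∑ i, ⟪n i a, v⟫ • n i a)‖
      = ‖∑ i, ((⟪n i a, v⟫ • n i a) - (⟪n i b, v⟫ • n i b))‖ := by
        rw [Finset.sum_sub_distrib]
        congr 1
        abel
    _ ≤ ∑ i : Fin m, ‖(⟪n i a, v⟫ • n i a) - (⟪n i b, v⟫ • n i b)‖ := norm_sum_le _ _
    _ = ∑ i : Fin m, ‖(⟪n i b, v⟫ • n i b) - (⟪n i a, v⟫ • n i a)‖ := by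
        simp [norm_sub_rev]
    _ ≤ ∑ _i : Fin m, 2 * C * ‖v‖ * (b - a) := Finset.sum_le_sum fun i _ => key i
    _ = 2 * m * C * ‖v‖ * (b - a) := by
        simp [Finset.sum_const, Finset.card_univ]
        ring
end
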